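/- arXiv:1210.2026 — 2 statements merged into one kernel-verified Lean document; each statement's English description precedes it below -/
import Mathlib

section
/- For every a ∈ ℕ^n with a ≤ t, there is an isomorphism of ℤ^n-graded S-modules r^*(S(−a)) ≅ S(−√a), where √a is the vector with (√a)_i = 1 if a_i > 0 and 0 otherwise. -/
open MvPolynomial

noncomputable def mono (K : Type) [Field K] {n : ℕ} (a : Fin n → ℕ) : MvPolynomial (Fin n) K :=
  monomial (Finsupp.equivFunOnFinite.symm a) 1

def rmap {n : ℕ} (t a : Fin n → ℕ) : Fin n → ℕ := fun i => if 0 < a i then t i else 0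

def sqrtv {n : ℕ} (a : Fin n → ℕ) : Fin n → ℕ := fun i => if 0 < a i then 1 else 0

structure MultiGrading (K : Type) [Field K] (n : ℕ) (M : Type) [AddCommGroup M]
    [Module (MvPolynomial (Fin n) K) M] [Module K M]
    [IsScalarTower K (MvPolynomial (Fin n) K) M] where
  g : (Fin n → ℕ) → Submodule K M
  internal : DirectSum.IsInternal g
  compat : ∀ a b : Fin n → ℕ, ∀ m ∈ g a, mono K b • m ∈ g (a + b)

variable {K : Type} [Field K] {n : ℕ}

def PosDetermined {M : Type} [AddCommGroup M] [Module (MvPolynomial (Fin n) K) M] [Module K M]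
    [IsScalarTower K (MvPolynomial (Fin n) K) M] (G : MultiGrading K n M) (t : Fin n → ℕ) : Prop :=
  ∀ (a : Fin n → ℕ) (i : Fin n), t i ≤ a i →
    Set.BijOn (fun m => (X i : MvPolynomial (Fin n) K) • m) (G.g a : Set M) (G.g (a + Pi.single i 1) : Set M)

def IsRStar {M N : Type} [AddCommGroup M] [Module (MvPolynomial (Fin n) K) M] [Module K M]
    [IsScalarTower K (MvPolynomial (Fin n) K) M]
    [AddCommGroup N] [Module (MvPolynomial (Fin n) K) N] [Module K N]
    [IsScalarTower K (MvPolynomial (Fin n) K) N]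
    (t : Fin n → ℕ) (G : MultiGrading K n M) (H : MultiGrading K n N) : Prop :=
  ∃ e : (Fin n → ℕ) → (M →ₗ[K] N),
    (∀ a, Set.InjOn (e a) (G.g (rmap t a))) ∧
    (∀ a, e a '' (G.g (rmap t a)) = (H.g a : Set N)) ∧
    (∀ a b : Fin n → ℕ, ∀ m ∈ G.g (rmap t a),
      e (a + b) (mono K (rmap t (a + b) - rmap t a) • m) = mono K b • e a m)

noncomputable def mdim (R : Type) [CommRing R] (M : Type) [AddCommGroup M] [Module R M] :
    WithBot ℕ∞ :=
  ringKrullDim (R ⧸ (⊤ : Submodule R M).annihilator)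

noncomputable def mdepth (K : Type) [Field K] (n : ℕ) (M : Type) [AddCommGroup M] [Module (MvPolynomial (Fin n) K) M] : ℕ :=
  sSup {k : ℕ | ∃ rs : List (MvPolynomial (Fin n) K), rs.length = k ∧
    (∀ r ∈ rs, r ∈ Ideal.span (Set.range (X : Fin n → MvPolynomial (Fin n) K))) ∧
    RingTheory.Sequence.IsRegular M rs}

noncomputable def IsCM (K : Type) [Field K] (n : ℕ) (M : Type) [AddCommGroup M] [Module (MvPolynomial (Fin n) K) M] : Prop :=
  (mdepth K n M : WithBot ℕ∞) = mdim (MvPolynomial (Fin n) K) M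

open Classical

/-! For `a ≤ t` one has `a ≤ r(b)` iff `√a ≤ b`, so the degree-`b` part of `r^*S(-a)` vanishes
unless `√a ≤ b`, and is then spanned by the nonzero image `g_b` of `x^{r(b)-a}`. The compatibility
of `r^*` gives `x^c g_b = g_{b+c}`, because `r(b+c) - r(b) + r(b) - a = r(b+c) - a`. Hence the
`g_{d+√a}` form a `K`-basis on which monomials act as on the monomial basis of `S`, and
`p ↦ p • g_{√a}` is an isomorphism `S(-√a) ≅ r^*S(-a)` of graded `S`-modules. -/

theorem LinearMap.bijective_toSpanSingleton_of_basis {ι R A N : Type*} [CommSemiring R]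
    [Semiring A] [Algebra R A] [AddCommMonoid N] [Module A N] [Module R N]
    [IsScalarTower R A N] (bA : Module.Basis ι R A) (bN : Module.Basis ι R N) (x : N)
    (h : ∀ i, bA i • x = bN i) :
    Function.Bijective (LinearMap.toSpanSingleton A N x) := by
  have hR : (LinearMap.toSpanSingleton A N x).restrictScalars R =
      (bA.equiv bN (Equiv.refl ι)).toLinearMap :=
    bA.ext fun i => by simp [h]
  exact congrArg DFunLike.coe hR ▸ LinearEquiv.bijective _

noncomputable def DirectSum.IsInternal.basisOfSpanSingleton {ι κ R N : Type*} [DivisionRing R]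
    [AddCommGroup N] [Module R N] [DecidableEq ι] {g : ι → Submodule R N}
    (hg : DirectSum.IsInternal g) {f : κ → ι} (hf : Function.Injective f) {v : κ → N}
    (hv : ∀ k, g (f k) = R ∙ v k) (hv0 : ∀ k, v k ≠ 0) (hbot : ∀ i ∉ Set.range f, g i = ⊥) :
    Module.Basis κ R N :=
  .mk (iSupIndep.linearIndependent _ (hg.submodule_iSupIndep.comp hf)
      (fun k => by simp [hv]) hv0) <| by
    rw [← hg.submodule_iSup_eq_top, iSup_le_iff]
    intro i
    by_cases hi : i ∈ Set.range f
    · obtain ⟨k, rfl⟩ := hi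
      rw [hv k, Submodule.span_le, Set.singleton_subset_iff]
      exact Submodule.subset_span ⟨k, rfl⟩
    · rw [hbot i hi]; exact bot_le

@[simp]
theorem DirectSum.IsInternal.coe_basisOfSpanSingleton {ι κ R N : Type*} [DivisionRing R]
    [AddCommGroup N] [Module R N] [DecidableEq ι] {g : ι → Submodule R N}
    (hg : DirectSum.IsInternal g) {f : κ → ι} (hf : Function.Injective f) {v : κ → N}
    (hv : ∀ k, g (f k) = R ∙ v k) (hv0 : ∀ k, v k ≠ 0) (hbot : ∀ i ∉ Set.range f, g i = ⊥) :
    ⇑(hg.basisOfSpanSingleton hf hv hv0 hbot) = v :=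
  Module.Basis.coe_mk _ _


theorem mono_mul (u v : Fin n → ℕ) : mono K u * mono K v = mono K (u + v) := by
  rw [mono, mono, mono, monomial_mul, one_mul]
  congr 2
  ext
  rfl

theorem mono_ne_zero (u : Fin n → ℕ) : mono K u ≠ 0 := by
  simp [mono, monomial_eq_zero]

variable (K n) in
noncomputable def monoBasis : Module.Basis (Fin n → ℕ) K (MvPolynomial (Fin n) K) :=
  (basisMonomials (Fin n) K).reindex Finsupp.equivFunOnFinite

@[simp]
theorem coe_monoBasis : ⇑(monoBasis K n) = mono K := by
  ext1 d
  simp [monoBasis, mono]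

theorem le_rmap_iff_sqrtv_le {t a b : Fin n → ℕ} (hat : a ≤ t) :
    a ≤ rmap t b ↔ sqrtv a ≤ b := by
  refine forall_congr' fun i => ?_
  have hi : a i ≤ t i := hat i
  by_cases ha : 0 < a i <;> by_cases hb : 0 < b i <;> simp [rmap, sqrtv, ha, hb] <;> omega

theorem rmap_le_rmap_add (t b c : Fin n → ℕ) : rmap t b ≤ rmap t (b + c) := by
  intro i
  by_cases hb : 0 < b i
  · simp [rmap, hb, show 0 < b i + c i by omega]
  · simp [rmap, hb]

section RStar

variable {N : Type} [AddCommGroup N] [Module K N]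
  {t a : Fin n → ℕ} {G : MultiGrading K n (MvPolynomial (Fin n) K)}
  {e : (Fin n → ℕ) → (MvPolynomial (Fin n) K →ₗ[K] N)}

/-- For `√a ≤ b`, `x^{r(b) - a}` spans `S(-a)_{r(b)}`, so its image under `e b` spans
`(r^*S(-a))_b`. -/
noncomputable def rstarGenerator (e : (Fin n → ℕ) → (MvPolynomial (Fin n) K →ₗ[K] N))
    (t a b : Fin n → ℕ) : N :=
  e b (mono K (rmap t b - a))

theorem rstar_grading_eq_map [Module (MvPolynomial (Fin n) K) N]
    [IsScalarTower K (MvPolynomial (Fin n) K) N] {H : MultiGrading K n N}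
    (himg : ∀ b, e b '' (G.g (rmap t b)) = (H.g b : Set N))
    (b : Fin n → ℕ) : H.g b = (G.g (rmap t b)).map (e b) :=
  SetLike.coe_injective (himg b).symm

variable (hat : a ≤ t)
  (hG : ∀ b, G.g b = if a ≤ b then K ∙ mono K (b - a) else ⊥)
include hat hG

theorem rstar_grading_eq_bot [Module (MvPolynomial (Fin n) K) N]
    [IsScalarTower K (MvPolynomial (Fin n) K) N] {H : MultiGrading K n N}
    (himg : ∀ b, e b '' (G.g (rmap t b)) = (H.g b : Set N))
    {b : Fin n → ℕ} (hb : ¬ sqrtv a ≤ b) : H.g b = ⊥ := by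
  rw [rstar_grading_eq_map himg, hG, if_neg ((le_rmap_iff_sqrtv_le hat).not.mpr hb),
    Submodule.map_bot]

theorem rstar_grading_eq_span_rstarGenerator [Module (MvPolynomial (Fin n) K) N]
    [IsScalarTower K (MvPolynomial (Fin n) K) N] {H : MultiGrading K n N}
    (himg : ∀ b, e b '' (G.g (rmap t b)) = (H.g b : Set N))
    {b : Fin n → ℕ} (hb : sqrtv a ≤ b) : H.g b = K ∙ rstarGenerator e t a b := by
  rw [rstar_grading_eq_map himg, hG, if_pos ((le_rmap_iff_sqrtv_le hat).mpr hb), Submodule.map_span,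
    Set.image_singleton, rstarGenerator]

theorem rstarGenerator_ne_zero (hinj : ∀ b, Set.InjOn (e b) (G.g (rmap t b)))
    {b : Fin n → ℕ} (hb : sqrtv a ≤ b) : rstarGenerator e t a b ≠ 0 := by
  have hmem : mono K (rmap t b - a) ∈ G.g (rmap t b) := by
    rw [hG, if_pos ((le_rmap_iff_sqrtv_le hat).mpr hb)]
    exact Submodule.mem_span_singleton_self _
  intro h0
  refine mono_ne_zero _ (hinj b hmem (Submodule.zero_mem _) ?_)
  rwa [map_zero]

theorem mono_smul_rstarGenerator [Module (MvPolynomial (Fin n) K) N]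
    (hcomp : ∀ b c : Fin n → ℕ, ∀ m ∈ G.g (rmap t b),
      e (b + c) (mono K (rmap t (b + c) - rmap t b) • m) = mono K c • e b m)
    {b : Fin n → ℕ} (hb : sqrtv a ≤ b) (c : Fin n → ℕ) :
    mono K c • rstarGenerator e t a b = rstarGenerator e t a (b + c) := by
  have hab : a ≤ rmap t b := (le_rmap_iff_sqrtv_le hat).mpr hb
  have hmem : mono K (rmap t b - a) ∈ G.g (rmap t b) := by
    rw [hG, if_pos hab]
    exact Submodule.mem_span_singleton_self _
  rw [rstarGenerator, ← hcomp b c _ hmem, smul_eq_mul, mono_mul,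
    tsub_add_tsub_cancel (rmap_le_rmap_add t b c) hab, rstarGenerator]

end RStar

theorem rstar_shift_general {N : Type}
    [AddCommGroup N] [Module (MvPolynomial (Fin n) K) N] [Module K N]
    [IsScalarTower K (MvPolynomial (Fin n) K) N]
    (t : Fin n → ℕ) (a : Fin n → ℕ) (hat : a ≤ t)
    (G : MultiGrading K n (MvPolynomial (Fin n) K))
    (hG : ∀ b : Fin n → ℕ, G.g b =
      if a ≤ b then Submodule.span K {mono K (b - a)} else ⊥)
    (H : MultiGrading K n N) (hN : IsRStar t G H) :
    ∃ e : N ≃ₗ[MvPolynomial (Fin n) K] MvPolynomial (Fin n) K,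
      ∀ b : Fin n → ℕ,
        Submodule.map (e.toLinearMap.restrictScalars K) (H.g b) =
          if sqrtv a ≤ b then Submodule.span K {mono K (b - sqrtv a)} else ⊥ := by
  obtain ⟨e, hinj, himg, hcomp⟩ := hN
  have hle : ∀ d, sqrtv a ≤ d + sqrtv a := fun d => le_add_self
  let B : Module.Basis (Fin n → ℕ) K N :=
    H.internal.basisOfSpanSingleton (add_left_injective (sqrtv a))
      (fun d => rstar_grading_eq_span_rstarGenerator hat hG himg (hle d))
      (fun d => rstarGenerator_ne_zero hat hG hinj (hle d))
      (fun b hb => rstar_grading_eq_bot hat hG himg fun h =>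
        hb ⟨b - sqrtv a, tsub_add_cancel_of_le h⟩)
  have hB : ∀ d, monoBasis K n d • B 0 = B d := fun d => by
    simpa [B, add_comm] using mono_smul_rstarGenerator hat hG hcomp (hle 0) d
  let E := LinearEquiv.ofBijective _ (LinearMap.bijective_toSpanSingleton_of_basis _ _ _ hB)
  refine ⟨E.symm, fun b => ?_⟩
  split_ifs with hb
  · have hE : E (mono K (b - sqrtv a)) = rstarGenerator e t a b := by
      simpa [E, B, tsub_add_cancel_of_le hb] using hB (b - sqrtv a)
    rw [rstar_grading_eq_span_rstarGenerator hat hG himg hb, Submodule.map_span,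
      Set.image_singleton, ← hE]
    simp
  · rw [rstar_grading_eq_bot hat hG himg hb, Submodule.map_bot]

/-- for `a ≤ t`, `r^*(S(−a)) ≅ S(−√a)` as `ℤ^n`-graded `S`-modules. Here `M = S`
carries the grading of the shifted module `S(−a)` (degree `b` component `K·x^{b−a}` for
`b ≥ a`), and `(N, H)` realizes `r^*` of it; the conclusion produces a graded isomorphism
onto `S(−√a)`. -/
theorem rstar_shift {N : Type}
    [AddCommGroup N] [Module (MvPolynomial (Fin n) K) N] [Module K N]
    [IsScalarTower K (MvPolynomial (Fin n) K) N]
    (t : Fin n → ℕ) (ht : ∀ i, 1 ≤ t i) (a : Fin n → ℕ) (hat : a ≤ t)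
    (G : MultiGrading K n (MvPolynomial (Fin n) K))
    (hG : ∀ b : Fin n → ℕ, G.g b =
      if a ≤ b then Submodule.span K {mono K (b - a)} else ⊥)
    (H : MultiGrading K n N) (hN : IsRStar t G H) :
    ∃ e : N ≃ₗ[MvPolynomial (Fin n) K] MvPolynomial (Fin n) K,
      ∀ b : Fin n → ℕ,
        Submodule.map (e.toLinearMap.restrictScalars K) (H.g b) =
          if sqrtv a ≤ b then Submodule.span K {mono K (b - sqrtv a)} else ⊥ :=
  rstar_shift_general t a hat G hG H hN
end

section
/- Let M be a positively t-determined S-module. Then every associated prime of r^*M is an associated prime of M: Ass(r^*M) ⊆ Ass(M). -/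
open MvPolynomial

variable {K : Type} [Field K] {n : ℕ}

/-!
Let `P = ann(z)` be an associated prime of `r^*M`. As for any `ℕⁿ`-graded module, a leading-term
argument shows that `P` is generated by the variables it contains and that `z` can be taken
homogeneous; multiplying `z` by the variables outside `P` we may assume its degree `a` satisfies
`a_i > 0` exactly for `x_i ∉ P` (on `r^*M`, `x_i` is injective in degrees with `a_i > 0`).
Lift `z` to `m ∈ M_{r(a)}`. For `x_i ∈ P` we have `a_i = 0`, so `r(a + e_i) = r(a) + t_i e_i`
and the relation `x_i z = 0` becomes `x_i^{t_i} m = 0`. Hence some monomial multiple `w ≠ 0` of `m` is killed by every `x_i ∈ P`, while `w` has degree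
`≥ t_i` in every other variable, where `M` is positively `t`-determined, so no monomial in those
variables kills `w`. Thus `ann(w) = P`.
-/

lemma mono_coe (d : Fin n →₀ ℕ) : mono K (⇑d) = monomial d 1 := by
  rw [mono, Finsupp.equivFunOnFinite_symm_coe]

lemma mono_zero : mono K (0 : Fin n → ℕ) = 1 := by
  rw [← Finsupp.coe_zero, mono_coe, monomial_zero', C_1]

lemma mono_add (a b : Fin n → ℕ) : mono K (a + b) = mono K a * mono K b := by
  rw [mono, mono, mono, monomial_mul, mul_one]
  congr 2
  exact Finsupp.ext fun _ => rfl

lemma mono_single (i : Fin n) (k : ℕ) :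
    mono K (Pi.single i k) = (X i : MvPolynomial (Fin n) K) ^ k := by
  rw [← Finsupp.single_eq_pi_single, mono_coe, X_pow_eq_monomial]

lemma MvPolynomial.monomial_one_eq_C_inv_mul {σ : Type*} {d : σ →₀ ℕ} {c : K}
    (hc : c ≠ 0) :
    (monomial d 1 : MvPolynomial σ K) = C c⁻¹ * monomial d c := by
  rw [C_mul_monomial, inv_mul_cancel₀ hc]

lemma MvPolynomial.exists_X_mem_of_monomial_mem {σ R : Type*} [CommSemiring R]
    {P : Ideal (MvPolynomial σ R)} [P.IsPrime] {d : σ →₀ ℕ} (h : monomial d 1 ∈ P) :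
    ∃ i, d i ≠ 0 ∧ X i ∈ P := by
  rw [← prod_X_pow_eq_monomial, Ideal.IsPrime.prod_mem_iff] at h
  obtain ⟨i, hi, hXi⟩ := h
  exact ⟨i, Finsupp.mem_support_iff.mp hi, ‹P.IsPrime›.mem_of_pow_mem _ hXi⟩

lemma MvPolynomial.support_sub_monomial_coeff {σ R : Type*} [CommRing R] [DecidableEq σ]
    (s : MvPolynomial σ R) (B : σ →₀ ℕ) :
    (s - monomial B (coeff B s)).support = s.support.erase B := by
  ext d
  by_cases hd : d = B
  · simp [hd]
  · simp [coeff_monomial, hd, Ne.symm hd]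

lemma MvPolynomial.eq_span_X_of_leading_monomial_mem {R : Type*} [CommRing R]
    (P : Ideal (MvPolynomial (Fin n) R)) [P.IsPrime] (hlead : ∀ s ∈ P, ∀ B ∈ s.support,
      (∀ d ∈ s.support, toLex ⇑d ≤ toLex ⇑B) → monomial B 1 ∈ P) :
    P = Ideal.span (X '' {i | X i ∈ P}) := by
  have hspan : Ideal.span (X '' {i | X i ∈ P}) ≤ P :=
    Ideal.span_le.mpr (by rintro _ ⟨i, hi, rfl⟩; exact hi)
  refine le_antisymm (fun s hs => ?_) hspan
  induction hN : s.support.card using Nat.strong_induction_on generalizing s with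
  | _ N ih =>
  obtain rfl | hs0 := eq_or_ne s 0
  · exact zero_mem _
  obtain ⟨B, hB, hBmax⟩ := Finset.exists_max_image s.support (fun d => toLex ⇑d)
    (support_nonempty.mpr hs0)
  obtain ⟨i, hi, hXi⟩ := exists_X_mem_of_monomial_mem (hlead s hs B hB hBmax)
  have hlt : monomial B (coeff B s) ∈ Ideal.span (X '' {i | X i ∈ P}) := by
    rw [mem_ideal_span_X_image]
    intro d hd
    rw [Finset.mem_singleton.mp (support_monomial_subset hd)]
    exact ⟨i, hXi, hi⟩
  have hrest := ih _ (hN ▸ (support_sub_monomial_coeff s B ▸ Finset.card_erase_lt_of_mem hB))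
    (s - monomial B (coeff B s)) (P.sub_mem hs (hspan hlt)) rfl
  simpa using add_mem hrest hlt

lemma isAssociatedPrime_iff_exists_smul_eq_zero {R M : Type*} [CommRing R] [IsNoetherianRing R]
    [AddCommGroup M] [Module R M] {P : Ideal R} :
    IsAssociatedPrime P M ↔ P.IsPrime ∧ ∃ x : M, ∀ s, s ∈ P ↔ s • x = 0 := by
  simp [isAssociatedPrime_iff, SetLike.ext_iff, Submodule.mem_colon_singleton]

lemma Ideal.IsPrime.exists_smul_eq_zero_imp_mem {R M ι : Type*} [CommRing R] [AddCommGroup M]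
    [Module R M] {P : Ideal R} (hP : P.IsPrime) {A : Finset ι} {y : ι → M}
    (h : ∀ s, s ∈ P ↔ s • ∑ a ∈ A, y a = 0) :
    ∃ a ∈ A, ∀ s, s • y a = 0 → s ∈ P := by
  obtain ⟨a, ha, hle⟩ := hP.prod_le (f := fun a => (R ∙ y a).annihilator).mp <|
    Ideal.prod_le_inf.trans fun s hs => (h s).2 <| by
      rw [Finset.smul_sum]
      refine Finset.sum_eq_zero fun a ha => ?_
      exact (Submodule.mem_annihilator_span_singleton _ _).mp
        (Finset.inf_le (f := fun a => (R ∙ y a).annihilator) ha hs)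
  exact ⟨a, ha, fun s hs => hle ((Submodule.mem_annihilator_span_singleton _ _).mpr hs)⟩

lemma Ideal.IsPrime.smul_eq_zero_iff_of_notMem {R M : Type*} [CommRing R] [AddCommGroup M]
    [Module R M] {P : Ideal R} (hP : P.IsPrime) {x : M} (h : ∀ s, s ∈ P ↔ s • x = 0) {r : R}
    (hr : r ∉ P) (s : R) : s ∈ P ↔ s • r • x = 0 := by
  rw [smul_smul, ← h, hP.mul_mem_iff_mem_or_mem, or_iff_left hr]

lemma MvPolynomial.smul_eq_zero_of_mem_span_X {σ R M : Type*} [CommRing R] [AddCommGroup M]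
    [Module (MvPolynomial σ R) M] {I : Set σ} {w : M}
    (hX : ∀ i ∈ I, (X i : MvPolynomial σ R) • w = 0) {s : MvPolynomial σ R}
    (hs : s ∈ Ideal.span (X '' I)) : s • w = 0 := by
  refine (Submodule.mem_annihilator_span_singleton _ _).mp (Ideal.span_le.mpr ?_ hs)
  rintro _ ⟨i, hi, rfl⟩
  exact (Submodule.mem_annihilator_span_singleton _ _).mpr (hX i hi)

lemma exists_mono_smul_ne_zero_and_X_smul_eq_zero {M : Type} [AddCommGroup M]
    [Module (MvPolynomial (Fin n) K) M] {m : M} (hm : m ≠ 0) (I : Finset (Fin n))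
    (N : Fin n → ℕ) (hN : ∀ i ∈ I, (X i : MvPolynomial (Fin n) K) ^ N i • m = 0) :
    ∃ k : Fin n → ℕ, mono K k • m ≠ 0 ∧
      ∀ i ∈ I, (X i : MvPolynomial (Fin n) K) • mono K k • m = 0 := by
  classical
  induction I using Finset.induction_on with
  | empty => exact ⟨0, by rwa [mono_zero, one_smul], by simp⟩
  | insert j I _ ih =>
    obtain ⟨k, hv, hXv⟩ := ih fun i hi => hN i (Finset.mem_insert_of_mem hi)
    have hex : ∃ l, (X j : MvPolynomial (Fin n) K) ^ l • mono K k • m = 0 :=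
      ⟨N j, by rw [smul_comm, hN j (Finset.mem_insert_self j I), smul_zero]⟩
    obtain ⟨l, hl⟩ : ∃ l, Nat.find hex = l + 1 :=
      Nat.exists_eq_succ_of_ne_zero fun h0 => hv (by simpa [h0] using Nat.find_spec hex)
    have hmono : mono K (k + Pi.single j l) • m =
        (X j : MvPolynomial (Fin n) K) ^ l • mono K k • m := by
      rw [mono_add, mono_single, mul_comm, mul_smul]
    refine ⟨k + Pi.single j l, ?_, fun i hi => ?_⟩
    · rw [hmono]
      exact Nat.find_min hex (by omega)
    · rw [hmono]
      rcases Finset.mem_insert.mp hi with rfl | hi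
      · rw [smul_smul, ← pow_succ', ← hl]
        exact Nat.find_spec hex
      · rw [smul_comm, hXv i hi, smul_zero]

section Graded

variable {M : Type} [AddCommGroup M] [Module (MvPolynomial (Fin n) K) M] [Module K M]
  [IsScalarTower K (MvPolynomial (Fin n) K) M]

namespace MultiGrading

variable (G : MultiGrading K n M)

lemma monomial_smul_mem {a : Fin n → ℕ} {m : M} (hm : m ∈ G.g a) (d : Fin n →₀ ℕ)
    (c : K) :
    (monomial d c : MvPolynomial (Fin n) K) • m ∈ G.g (a + ⇑d) := by
  rw [← mul_one c, ← smul_eq_mul, ← smul_monomial, smul_assoc, ← mono_coe]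
  exact (G.g _).smul_mem c (G.compat a d m hm)

lemma X_smul_mem {a : Fin n → ℕ} {m : M} (hm : m ∈ G.g a) (i : Fin n) :
    (X i : MvPolynomial (Fin n) K) • m ∈ G.g (a + Pi.single i 1) := by
  simpa only [mono_single, pow_one] using G.compat a (Pi.single i 1) m hm

lemma exists_finset_sum_eq (z : M) :
    ∃ (A : Finset (Fin n → ℕ)) (w : (Fin n → ℕ) → M),
      (∀ a, w a ∈ G.g a) ∧ z = ∑ a ∈ A, w a := by
  classical
  let _ := G.internal.chooseDecomposition
  exact ⟨_, fun a => DirectSum.decompose G.g z a, fun a => (DirectSum.decompose G.g z a).2,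
    (DirectSum.sum_support_decompose G.g z).symm⟩

lemma sum_filter_eq_zero {ι : Type*} {s : Finset ι} {deg : ι → Fin n → ℕ} {v : ι → M}
    (hv : ∀ i ∈ s, v i ∈ G.g (deg i)) (h : ∑ i ∈ s, v i = 0) (c : Fin n → ℕ) :
    ∑ i ∈ s with deg i = c, v i = 0 := by
  let _ := G.internal.chooseDecomposition
  calc ∑ i ∈ s with deg i = c, v i
      = ∑ i ∈ s, (DirectSum.decompose G.g (v i) c : M) := by
        rw [Finset.sum_filter]
        refine Finset.sum_congr rfl fun i hi => ?_
        split_ifs with hc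
        · rw [← hc, DirectSum.decompose_of_mem_same _ (hv i hi)]
        · rw [DirectSum.decompose_of_mem_ne _ (hv i hi) hc]
    _ = 0 := by
        rw [← Submodule.coe_sum, ← DFinsupp.finsetSum_apply, ← DirectSum.decompose_sum, h,
          DirectSum.decompose_zero, DirectSum.zero_apply, ZeroMemClass.coe_zero]

lemma eq_zero_of_sum_eq_zero {ι : Type*} {s : Finset ι} {deg : ι → Fin n → ℕ}
    (hdeg : Set.InjOn deg s) {v : ι → M} (hv : ∀ i ∈ s, v i ∈ G.g (deg i))
    (h : ∑ i ∈ s, v i = 0) {i : ι} (hi : i ∈ s) : v i = 0 := by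
  have hfiber : {j ∈ s | deg j = deg i} = {i} := by
    ext j
    simp only [Finset.mem_filter, Finset.mem_singleton]
    exact ⟨fun ⟨hj, hdj⟩ => hdeg hj hi hdj, by rintro rfl; exact ⟨hi, rfl⟩⟩
  simpa [hfiber] using G.sum_filter_eq_zero hv h (deg i)

lemma monomial_coeff_smul_eq_zero {a : Fin n → ℕ} {m : M} (hm : m ∈ G.g a)
    {s : MvPolynomial (Fin n) K} (hs : s • m = 0) (d : Fin n →₀ ℕ) :
    (monomial d (coeff d s) : MvPolynomial (Fin n) K) • m = 0 := by
  by_cases hd : d ∈ s.support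
  · refine G.eq_zero_of_sum_eq_zero (deg := fun e : Fin n →₀ ℕ => a + ⇑e)
      (v := fun e => (monomial e (coeff e s) : MvPolynomial (Fin n) K) • m) ?_
      (fun e _ => G.monomial_smul_mem hm e _) ?_ hd
    · exact fun e _ e' _ h => DFunLike.coe_injective (add_left_cancel h)
    · rw [← Finset.sum_smul, support_sum_monomial_coeff, hs]
  · rw [notMem_support_iff.mp hd, monomial_zero, zero_smul]

lemma X_smul_eq_zero_of_smul_sum_eq_zero {A : Finset (Fin n → ℕ)} {w : (Fin n → ℕ) → M}
    (hw : ∀ a, w a ∈ G.g a) {i : Fin n}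
    (h : (X i : MvPolynomial (Fin n) K) • ∑ a ∈ A, w a = 0)
    {a : Fin n → ℕ} (ha : a ∈ A) : (X i : MvPolynomial (Fin n) K) • w a = 0 :=
  G.eq_zero_of_sum_eq_zero (deg := fun a => a + Pi.single i 1)
    (fun _ _ _ _ h => add_right_cancel h) (fun a _ => G.X_smul_mem (hw a) i)
    (by rw [← Finset.smul_sum, h]) ha

/-- In the lex-largest degree `a + β + B` of `s • ∑ w`, the only term is `lt(s) • w a`, which
therefore vanishes; then induct on `lt(s) • ∑ w`, a sum with one term fewer. -/
lemma leading_term_pow_smul_eq_zero {s : MvPolynomial (Fin n) K} {B : Fin n →₀ ℕ}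
    (hB : B ∈ s.support) (hmax : ∀ d ∈ s.support, toLex ⇑d ≤ toLex ⇑B)
    (A : Finset (Fin n → ℕ)) (β : Fin n → ℕ) (w : (Fin n → ℕ) → M)
    (hw : ∀ a ∈ A, w a ∈ G.g (a + β)) (hs : s • ∑ a ∈ A, w a = 0) :
    (monomial B (coeff B s) : MvPolynomial (Fin n) K) ^ A.card • ∑ a ∈ A, w a = 0 := by
  induction A using Finset.induction_on_max_value (α := Lex (Fin n → ℕ)) toLex
    generalizing β w with
  | empty => simp
  | insert a A haA hAa ih =>
    set u : MvPolynomial (Fin n) K := monomial B (coeff B s)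
    have hterms : ∑ p ∈ (insert a A) ×ˢ s.support,
        (monomial p.2 (coeff p.2 s) : MvPolynomial (Fin n) K) • w p.1 = 0 := by
      rw [Finset.sum_product, ← hs, Finset.smul_sum]
      refine Finset.sum_congr rfl fun x _ => ?_
      dsimp only
      rw [← Finset.sum_smul, support_sum_monomial_coeff]
    have hfiber : ((insert a A) ×ˢ s.support).filter
        (fun p : (Fin n → ℕ) × (Fin n →₀ ℕ) => p.1 + β + ⇑p.2 = a + β + ⇑B) =
          {(a, B)} := by
      ext ⟨x, d⟩
      simp only [Finset.mem_filter, Finset.mem_product, Finset.mem_singleton, Prod.mk.injEq]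
      refine ⟨fun ⟨⟨hx, hd⟩, hdeg⟩ => ?_, ?_⟩
      swap
      · rintro ⟨rfl, rfl⟩
        exact ⟨⟨Finset.mem_insert_self _ A, hB⟩, rfl⟩
      have hxa : toLex x ≤ toLex a := by
        rcases Finset.mem_insert.mp hx with rfl | hx
        exacts [le_rfl, hAa x hx]
      have hsum : toLex x + toLex ⇑d = toLex a + toLex ⇑B := by
        rw [add_right_comm x, add_right_comm a] at hdeg
        exact congrArg toLex (add_right_cancel hdeg)
      obtain ⟨hx, hd⟩ := (add_eq_add_iff_eq_and_eq hxa (hmax d hd)).mp hsum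
      exact ⟨toLex.injective hx, DFunLike.coe_injective (toLex.injective hd)⟩
    have htop : u • w a = 0 := by
      simpa [hfiber] using G.sum_filter_eq_zero
        (fun p hp => G.monomial_smul_mem (hw p.1 (Finset.mem_product.mp hp).1) p.2 _) hterms
        (a + β + ⇑B)
    have hshift : u • ∑ x ∈ insert a A, w x = ∑ x ∈ A, u • w x := by
      rw [Finset.sum_insert haA, smul_add, htop, zero_add, Finset.smul_sum]
    have hrest := ih (β + ⇑B) (fun x => u • w x)
      (fun x hx => add_assoc x β ⇑B ▸
        G.monomial_smul_mem (hw x (Finset.mem_insert_of_mem hx)) B _)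
      (by rw [← hshift, smul_comm, hs, smul_zero])
    rw [Finset.card_insert_of_notMem haA, pow_succ, mul_smul, hshift]
    exact hrest

lemma monomial_mem_of_isAssociatedPrime (G : MultiGrading K n M)
    {P : Ideal (MvPolynomial (Fin n) K)} (hP : IsAssociatedPrime P M)
    {s : MvPolynomial (Fin n) K} (hs : s ∈ P) {B : Fin n →₀ ℕ} (hB : B ∈ s.support)
    (hmax : ∀ d ∈ s.support, toLex ⇑d ≤ toLex ⇑B) :
    monomial B 1 ∈ P := by
  obtain ⟨hprime, x, hx⟩ := isAssociatedPrime_iff_exists_smul_eq_zero.mp hP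
  obtain ⟨A, w, hw, rfl⟩ := G.exists_finset_sum_eq x
  have hpow := G.leading_term_pow_smul_eq_zero hB hmax A 0 w (by simpa using fun a _ => hw a)
    ((hx s).mp hs)
  have hlead := hprime.mem_of_pow_mem _ ((hx _).mpr hpow)
  rw [monomial_one_eq_C_inv_mul (mem_support_iff.mp hB)]
  exact P.mul_mem_left _ hlead

lemma eq_span_X_of_isAssociatedPrime (G : MultiGrading K n M)
    {P : Ideal (MvPolynomial (Fin n) K)} (hP : IsAssociatedPrime P M) :
    P = Ideal.span (X '' {i | X i ∈ P}) :=
  have := hP.isPrime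
  eq_span_X_of_leading_monomial_mem P fun _ hs _ hB hmax =>
    G.monomial_mem_of_isAssociatedPrime hP hs hB hmax

lemma exists_homogeneous_of_isAssociatedPrime
    {P : Ideal (MvPolynomial (Fin n) K)} (hP : IsAssociatedPrime P M) :
    ∃ a, ∃ z ∈ G.g a, ∀ s, s ∈ P ↔ s • z = 0 := by
  have hspan := G.eq_span_X_of_isAssociatedPrime hP
  obtain ⟨hprime, x, hx⟩ := isAssociatedPrime_iff_exists_smul_eq_zero.mp hP
  obtain ⟨A, w, hw, rfl⟩ := G.exists_finset_sum_eq x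
  obtain ⟨a, ha, hle⟩ := hprime.exists_smul_eq_zero_imp_mem hx
  have hge : ∀ s ∈ P, s • w a = 0 := fun s hs =>
    smul_eq_zero_of_mem_span_X
      (fun i hi => G.X_smul_eq_zero_of_smul_sum_eq_zero hw ((hx _).mp hi) ha) (hspan ▸ hs)
  exact ⟨a, w a, hw a, fun s => ⟨hge s, hle s⟩⟩

lemma exists_homogeneous_of_isAssociatedPrime_pos
    {P : Ideal (MvPolynomial (Fin n) K)} (hP : IsAssociatedPrime P M) :
    ∃ a, ∃ z ∈ G.g a, z ≠ 0 ∧ (∀ s, s ∈ P ↔ s • z = 0) ∧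
      ∀ i, X i ∉ P → 0 < a i := by
  classical
  have hprime := hP.isPrime
  obtain ⟨a, z, hz, hPz⟩ := G.exists_homogeneous_of_isAssociatedPrime hP
  let u : Fin n → ℕ := fun i => if X i ∈ P then 0 else 1
  have hu : mono K u ∉ P := fun h => by
    obtain ⟨i, hi, hXi⟩ := exists_X_mem_of_monomial_mem h
    simp [u, hXi] at hi
  have hPuz := hprime.smul_eq_zero_iff_of_notMem hPz hu
  refine ⟨a + u, mono K u • z, G.compat a u z hz, fun h0 => hprime.ne_top ?_, hPuz,
    fun i hi => by simp [u, hi]⟩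
  exact (Ideal.eq_top_iff_one P).mpr ((hPuz 1).mpr (by rw [h0, smul_zero]))

end MultiGrading

namespace PosDetermined

variable {G : MultiGrading K n M} {t : Fin n → ℕ}

lemma eq_zero_of_X_pow_smul_eq_zero (hM : PosDetermined G t) {i : Fin n} {c : Fin n → ℕ}
    (hc : t i ≤ c i) {m : M} (hm : m ∈ G.g c) (k : ℕ)
    (h : (X i : MvPolynomial (Fin n) K) ^ k • m = 0) : m = 0 := by
  induction k generalizing c m with
  | zero => simpa using h
  | succ k ih =>
    have hXm : (X i : MvPolynomial (Fin n) K) • m = 0 :=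
      ih (c := c + Pi.single i 1) (by simp; omega) (G.X_smul_mem hm i)
        (by rwa [← mul_smul, ← pow_succ])
    exact (hM c i hc).injOn hm (zero_mem _) (by simp [hXm])

lemma eq_zero_of_monomial_smul_eq_zero (hM : PosDetermined G t) {c : Fin n → ℕ} {m : M}
    (hm : m ∈ G.g c) (d : Fin n →₀ ℕ) (hd : ∀ i, d i ≠ 0 → t i ≤ c i)
    (h : (monomial d 1 : MvPolynomial (Fin n) K) • m = 0) : m = 0 := by
  induction d using Finsupp.induction with
  | zero => simpa using h
  | single_add i k d hi hk ih =>
    refine ih (fun j hj => hd j ?_) ?_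
    · simp [hj]
    refine hM.eq_zero_of_X_pow_smul_eq_zero (i := i) (c := c + ⇑d) ?_
      (G.monomial_smul_mem hm d 1) k ?_
    · have := hd i (by simp [hk])
      simp only [Pi.add_apply]
      omega
    · rw [← h, ← mul_smul, X_pow_eq_monomial, monomial_mul, one_mul]

lemma mem_span_X_iff_smul_eq_zero (hM : PosDetermined G t) {I : Set (Fin n)} {c : Fin n → ℕ}
    (hc : ∀ i ∉ I, t i ≤ c i) {w : M} (hw : w ∈ G.g c) (hw0 : w ≠ 0)
    (hX : ∀ i ∈ I, (X i : MvPolynomial (Fin n) K) • w = 0) (s : MvPolynomial (Fin n) K) :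
    s ∈ Ideal.span (X '' I) ↔ s • w = 0 := by
  refine ⟨fun hs => ?_, fun hs => mem_ideal_span_X_image.mpr fun d hd => ?_⟩
  · exact smul_eq_zero_of_mem_span_X hX hs
  by_contra! hdI
  refine hw0 (hM.eq_zero_of_monomial_smul_eq_zero hw d
    (fun i hi => hc i fun hiI => hi (hdI i hiI)) ?_)
  rw [monomial_one_eq_C_inv_mul (mem_support_iff.mp hd), mul_smul,
    G.monomial_coeff_smul_eq_zero hw hs d, smul_zero]

end PosDetermined

end Graded

lemma rmap_add_single_of_pos (t : Fin n → ℕ) {a : Fin n → ℕ} {i : Fin n} (hi : 0 < a i) :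
    rmap t (a + Pi.single i 1) = rmap t a := by
  funext j
  by_cases hj : j = i
  · subst hj
    simp [rmap, hi]
  · simp [rmap, Pi.single_eq_of_ne hj]

lemma rmap_add_single_of_eq_zero (t : Fin n → ℕ) {a : Fin n → ℕ} {i : Fin n}
    (hi : a i = 0) :
    rmap t (a + Pi.single i 1) = rmap t a + Pi.single i (t i) := by
  funext j
  by_cases hj : j = i
  · subst hj
    simp [rmap, hi]
  · simp [rmap, Pi.single_eq_of_ne hj]

namespace IsRStar

variable {M N : Type} [AddCommGroup M] [Module (MvPolynomial (Fin n) K) M] [Module K M]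
  [IsScalarTower K (MvPolynomial (Fin n) K) M]
  [AddCommGroup N] [Module (MvPolynomial (Fin n) K) N] [Module K N]
  [IsScalarTower K (MvPolynomial (Fin n) K) N]
  {t : Fin n → ℕ} {G : MultiGrading K n M} {H : MultiGrading K n N}

lemma X_smul_ne_zero (hN : IsRStar t G H) {a : Fin n → ℕ} {z : N} (hz : z ∈ H.g a)
    (hz0 : z ≠ 0) {i : Fin n} (hi : 0 < a i) : (X i : MvPolynomial (Fin n) K) • z ≠ 0 := by
  obtain ⟨e, hinj, himg, hrel⟩ := hN
  obtain ⟨m, hm, rfl⟩ : z ∈ e a '' G.g (rmap t a) := (himg a).symm ▸ hz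
  intro hXz
  have hr := rmap_add_single_of_pos t hi
  have h := hrel a (Pi.single i 1) m hm
  rw [hr, tsub_self, mono_zero, one_smul, mono_single, pow_one, hXz] at h
  have hm0 := hinj (a + Pi.single i 1) (hr ▸ hm) (zero_mem _) (by rw [h, map_zero])
  exact hz0 (by rw [hm0, map_zero])

lemma exists_lift (hN : IsRStar t G H) {a : Fin n → ℕ} {z : N} (hz : z ∈ H.g a)
    (hz0 : z ≠ 0) :
    ∃ m ∈ G.g (rmap t a), m ≠ 0 ∧
      ∀ i, a i = 0 → (X i : MvPolynomial (Fin n) K) • z = 0 →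
        (X i : MvPolynomial (Fin n) K) ^ t i • m = 0 := by
  obtain ⟨e, hinj, himg, hrel⟩ := hN
  obtain ⟨m, hm, rfl⟩ : z ∈ e a '' G.g (rmap t a) := (himg a).symm ▸ hz
  refine ⟨m, hm, by rintro rfl; exact hz0 (map_zero _), fun i hi hXz => ?_⟩
  have hr := rmap_add_single_of_eq_zero t hi
  have h := hrel a (Pi.single i 1) m hm
  rw [hr, add_tsub_cancel_left, mono_single, mono_single, pow_one, hXz] at h
  refine hinj (a + Pi.single i 1) ?_ (zero_mem _) (by rw [h, map_zero])
  rw [hr, ← mono_single]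
  exact G.compat _ _ m hm

end IsRStar

theorem ass_rstar_subset_general {M N : Type} [AddCommGroup M] [Module (MvPolynomial (Fin n) K) M]
    [Module K M] [IsScalarTower K (MvPolynomial (Fin n) K) M]
    [AddCommGroup N] [Module (MvPolynomial (Fin n) K) N] [Module K N]
    [IsScalarTower K (MvPolynomial (Fin n) K) N]
    (t : Fin n → ℕ)
    (G : MultiGrading K n M)
    (hM : PosDetermined G t)
    (H : MultiGrading K n N) (hN : IsRStar t G H) :
    associatedPrimes (MvPolynomial (Fin n) K) N ⊆ associatedPrimes (MvPolynomial (Fin n) K) M := by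
  classical
  intro P hP
  obtain ⟨a, z, hz, hz0, hPz, hpos⟩ := H.exists_homogeneous_of_isAssociatedPrime_pos hP
  let I : Finset (Fin n) := {i | X i ∈ P}
  have hI : ∀ i, i ∈ I ↔ X i ∈ P := by simp [I]
  have hXz : ∀ i ∈ I, (X i : MvPolynomial (Fin n) K) • z = 0 := fun i hi =>
    (hPz _).mp ((hI i).mp hi)
  have ha : ∀ i ∈ I, a i = 0 := fun i hi =>
    Nat.eq_zero_of_not_pos fun h => hN.X_smul_ne_zero hz hz0 h (hXz i hi)
  obtain ⟨m, hm, hm0, hnil⟩ := hN.exists_lift hz hz0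
  obtain ⟨k, hw0, hXw⟩ :=
    exists_mono_smul_ne_zero_and_X_smul_eq_zero hm0 I t fun i hi => hnil i (ha i hi) (hXz i hi)
  have hc : ∀ i ∉ (I : Set (Fin n)), t i ≤ (rmap t a + k) i := fun i hi => by
    simp [rmap, hpos i (mt (hI i).mpr hi)]
  have hPI : P = Ideal.span (X '' I) := by
    rw [H.eq_span_X_of_isAssociatedPrime hP]
    congr; ext i; exact (hI i).symm
  refine isAssociatedPrime_iff_exists_smul_eq_zero.mpr ⟨hP.isPrime, mono K k • m, fun s => ?_⟩
  rw [hPI]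
  exact hM.mem_span_X_iff_smul_eq_zero hc (G.compat _ k m hm) hw0 hXw s

/-- `Ass(r^*M) ⊆ Ass(M)`. -/
theorem ass_rstar_subset {M N : Type} [AddCommGroup M] [Module (MvPolynomial (Fin n) K) M]
    [Module K M] [IsScalarTower K (MvPolynomial (Fin n) K) M]
    [AddCommGroup N] [Module (MvPolynomial (Fin n) K) N] [Module K N]
    [IsScalarTower K (MvPolynomial (Fin n) K) N]
    (t : Fin n → ℕ) (ht : ∀ i, 1 ≤ t i)
    (G : MultiGrading K n M) [Module.Finite (MvPolynomial (Fin n) K) M]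
    (hM : PosDetermined G t)
    (H : MultiGrading K n N) (hN : IsRStar t G H) :
    associatedPrimes (MvPolynomial (Fin n) K) N ⊆ associatedPrimes (MvPolynomial (Fin n) K) M :=
  ass_rstar_subset_general t G hM H hN
end
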